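/- Fix a nonzero complex number β^{1/2}, set β^{−1/2} := (β^{1/2})^{−1} and 𝒬 := β^{1/2} − β^{−1/2}. Let Γ be a free abelian group of finite rank, let S ⊆ Γ be a finite subset with 0 ∉ S and S = −S, and let Z : Γ → ℂ and ẑ : Γ → ℂ be group homomorphisms with Z(γ) ≠ 0 for every γ ∈ S. Let Ω, Ω̄ : Γ → ℚ[t, t^{−1}] be maps vanishing outside S and satisfying Ω(γ) = Ω(−γ) and Ω̄(γ) = Ω̄(−γ) for all γ ∈ Γ; write Ω(γ) = Σ_{n∈ℤ} Ω_n(γ) t^n and likewise for Ω̄. If Ω̄_n(γ) + Ω̄_{−n}(γ) = Ω_n(γ) + Ω_{−n}(γ) for every γ ∈ Γ and every n ∈ ℤ, then for every integer k ≥ 1 one has Σ_{γ∈S} Σ_{n∈ℤ} Ω̄_n(γ) · B_{2,k+2}(𝒬/2 + ẑ(γ)/(2πi) + n𝒬/2 | β^{1/2}, −β^{−1/2}) · (2πi/Z(γ))^k = Σ_{γ∈S} Σ_{n∈ℤ} Ω_n(γ) · B_{2,k+2}(𝒬/2 + ẑ(γ)/(2πi) + n𝒬/2 | β^{1/2}, −β^{−1/2})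 · (2πi/Z(γ))^k. -/

import Mathlib

/-!
Substituting `w ↦ -w` in the generating series gives the reflection formula
`B_{N,k}(a₁ + ⋯ + a_N - x | a) = (-1)^k B_{N,k}(x | a)`. For `a = (β^{1/2}, -β^{-1/2})` the
argument of the Bernoulli polynomial at `(-γ, -n)` is the reflection of the one at `(γ, n)`, and
`(2πi/Z(-γ))^k = (-1)^k (2πi/Z(γ))^k`, so every summand is invariant under `(γ, n) ↦ (-γ, -n)`.
As `S = -S` and `Ω(-γ) = Ω(γ)`, reindexing by this involution replaces `Ω_n(γ)` by `Ω_{-n}(γ)`;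
hence twice the free energy only depends on the symmetric combinations `Ω_n + Ω_{-n}`.
-/

open scoped Nat

/-- The formal power series `e^{c w} ∈ ℂ⟦w⟧`. -/
noncomputable def expPS (c : ℂ) : PowerSeries ℂ :=
  PowerSeries.rescale c (PowerSeries.exp ℂ)

/-- The formal power series `(e^{a w} - 1)/w ∈ ℂ⟦w⟧`; its constant term is `a`,
so it is invertible in `ℂ⟦w⟧` whenever `a ≠ 0`. -/
noncomputable def bernFactor (a : ℂ) : PowerSeries ℂ :=
  PowerSeries.mk fun n => PowerSeries.coeff (n + 1) (expPS a)

/-- The generating series `w^N e^{xw} / ∏ᵢ (e^{aᵢ w} - 1) ∈ ℂ⟦w⟧` of the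
multiple Bernoulli polynomials. -/
noncomputable def multBernoulliGF {N : ℕ} (x : ℂ) (a : Fin N → ℂ) : PowerSeries ℂ :=
  expPS x * (∏ i, bernFactor (a i))⁻¹

/-- The multiple Bernoulli polynomial `B_{N,k}(x | a₁, …, a_N)`, defined via
`w^N e^{xw} / ∏ᵢ (e^{aᵢ w} - 1) = Σ_k B_{N,k}(x | a) w^k / k!`. -/
noncomputable def multBernoulli (N k : ℕ) (x : ℂ) (a : Fin N → ℂ) : ℂ :=
  (k ! : ℂ) * PowerSeries.coeff k (multBernoulliGF x a)

open PowerSeries Finset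

lemma coeff_expPS (c : ℂ) (n : ℕ) : coeff n (expPS c) = c ^ n / n ! := by
  simp [expPS, coeff_rescale, coeff_exp]
  ring

lemma constantCoeff_expPS (c : ℂ) : constantCoeff (expPS c) = 1 := by
  simp [← coeff_zero_eq_constantCoeff_apply, coeff_expPS]

lemma expPS_zero : expPS 0 = 1 := by
  simp [expPS]

lemma expPS_mul_expPS (c d : ℂ) : expPS c * expPS d = expPS (c + d) :=
  exp_mul_exp_eq_exp_add c d

lemma inv_expPS (c : ℂ) : (expPS c)⁻¹ = expPS (-c) := by
  rw [PowerSeries.inv_eq_iff_mul_eq_one (by simp [constantCoeff_expPS]), expPS_mul_expPS,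
    neg_add_cancel, expPS_zero]

lemma rescale_expPS (a c : ℂ) : rescale a (expPS c) = expPS (c * a) := by
  rw [expPS, expPS, rescale_rescale]

lemma prod_expPS {ι : Type*} (s : Finset ι) (c : ι → ℂ) :
    ∏ i ∈ s, expPS (c i) = expPS (∑ i ∈ s, c i) := by
  classical
  induction s using Finset.induction_on with
  | empty => simp [expPS_zero]
  | insert i s hi ih => rw [prod_insert hi, sum_insert hi, ih, expPS_mul_expPS]

lemma X_mul_bernFactor (a : ℂ) : X * bernFactor a = expPS a - 1 := by
  ext n
  cases n with
  | zero => simp [constantCoeff_expPS]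
  | succ m => simp [bernFactor, coeff_succ_X_mul, coeff_one]

lemma rescale_neg_one_bernFactor (a : ℂ) :
    rescale (-1) (bernFactor a) = expPS (-a) * bernFactor a := by
  refine mul_left_cancel₀ (X_ne_zero (R := ℂ)) ?_
  calc X * rescale (-1) (bernFactor a) = -rescale (-1) (X * bernFactor a) := by
        simp [rescale_X]
    _ = expPS (-a) * (expPS a - 1) := by
        rw [X_mul_bernFactor, map_sub, map_one, rescale_expPS, mul_sub, expPS_mul_expPS,
          neg_add_cancel, expPS_zero, mul_neg_one]
        ring
    _ = X * (expPS (-a) * bernFactor a) := by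
        rw [← X_mul_bernFactor, mul_left_comm]

lemma PowerSeries.rescale_inv {k : Type*} [Field k] (a : k) (f : PowerSeries k) :
    rescale a f⁻¹ = (rescale a f)⁻¹ := by
  have hc : constantCoeff (rescale a f) = constantCoeff f := by
    rw [← coeff_zero_eq_constantCoeff_apply, coeff_rescale, pow_zero, one_mul,
      coeff_zero_eq_constantCoeff_apply]
  by_cases h : constantCoeff f = 0
  · rw [PowerSeries.inv_eq_zero.mpr h, PowerSeries.inv_eq_zero.mpr (hc ▸ h), map_zero]
  · rw [eq_comm, PowerSeries.inv_eq_iff_mul_eq_one (hc ▸ h), ← map_mul,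
      PowerSeries.inv_mul_cancel _ h, map_one]

lemma multBernoulliGF_sum_sub {N : ℕ} (a : Fin N → ℂ) (x : ℂ) :
    multBernoulliGF (∑ i, a i - x) a = rescale (-1) (multBernoulliGF x a) := by
  simp only [multBernoulliGF, map_mul, rescale_inv, map_prod, rescale_neg_one_bernFactor,
    prod_mul_distrib, prod_expPS, PowerSeries.mul_inv_rev, inv_expPS, rescale_expPS]
  rw [mul_comm _ (expPS (-_)), ← mul_assoc, expPS_mul_expPS, sum_neg_distrib, neg_neg, mul_neg_one, neg_add_eq_sub]

lemma multBernoulli_sum_sub (N k : ℕ) (x : ℂ) (a : Fin N → ℂ) :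
    multBernoulli N k (∑ i, a i - x) a = (-1) ^ k * multBernoulli N k x a := by
  rw [multBernoulli, multBernoulli, multBernoulliGF_sum_sub, coeff_rescale]
  ring

lemma Finset.sum_comp_neg_of_neg_mem {Γ M : Type*} [AddGroup Γ] [AddCommMonoid M]
    {S : Finset Γ} (hS : ∀ γ ∈ S, -γ ∈ S) (g : Γ → M) :
    ∑ γ ∈ S, g (-γ) = ∑ γ ∈ S, g γ :=
  Finset.sum_equiv (Equiv.neg Γ) (fun γ => ⟨hS γ, fun h => neg_neg γ ▸ hS _ h⟩)
    fun _ _ => rfl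

section NegPairing

variable {Γ : Type*} [AddCommGroup Γ] {S : Finset Γ} {f : Γ → ℤ → ℂ}

lemma two_mul_sum_finsum_eq_sum_finsum_add_comp_neg (hS : ∀ γ ∈ S, -γ ∈ S)
    (hf : ∀ γ n, f (-γ) (-n) = f γ n) {c : Γ → ℤ →₀ ℚ} (hc : ∀ γ, c (-γ) = c γ) :
    2 * ∑ γ ∈ S, ∑ᶠ n, (c γ n : ℂ) * f γ n =
      ∑ γ ∈ S, ∑ᶠ n, ((c γ n + c γ (-n) : ℚ) : ℂ) * f γ n := by
  have hreflect : ∑ γ ∈ S, ∑ᶠ n, (c γ n : ℂ) * f γ n =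
      ∑ γ ∈ S, ∑ᶠ n, (c γ (-n) : ℂ) * f γ n := by
    rw [← Finset.sum_comp_neg_of_neg_mem hS]
    refine sum_congr rfl fun γ _ => ?_
    rw [← finsum_comp_equiv (Equiv.neg ℤ)]
    simp [hc, hf]
  rw [two_mul]
  nth_rewrite 2 [hreflect]
  rw [← sum_add_distrib]
  refine sum_congr rfl fun γ _ => ?_
  have hfin {e : ℤ → ℤ} (he : Function.Injective e) :
      (fun n => (c γ (e n) : ℂ) * f γ n).HasFiniteSupport :=
    (((c γ).hasFiniteSupport.comp_of_injective he).comp Rat.cast_zero).mul_left (f γ)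
  rw [← finsum_add_distrib (hfin (e := fun n => n) fun _ _ h => h) (hfin neg_injective)]
  push_cast
  simp only [add_mul]

lemma sum_finsum_eq_of_add_comp_neg_eq (hS : ∀ γ ∈ S, -γ ∈ S)
    (hf : ∀ γ n, f (-γ) (-n) = f γ n) {c c' : Γ → ℤ →₀ ℚ} (hc : ∀ γ, c (-γ) = c γ)
    (hc' : ∀ γ, c' (-γ) = c' γ) (hcc' : ∀ γ n, c γ n + c γ (-n) = c' γ n + c' γ (-n)) :
    ∑ γ ∈ S, ∑ᶠ n, (c γ n : ℂ) * f γ n = ∑ γ ∈ S, ∑ᶠ n, (c' γ n : ℂ) * f γ n := by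
  refine mul_left_cancel₀ two_ne_zero ?_
  simp only [two_mul_sum_finsum_eq_sum_finsum_add_comp_neg hS hf hc,
    two_mul_sum_finsum_eq_sum_finsum_add_comp_neg hS hf hc', hcc']

end NegPairing


noncomputable def freeEnergySummand {Γ : Type*} [AddCommGroup Γ] (b : ℂ) (Z zhat : Γ →+ ℂ)
    (k : ℕ) (γ : Γ) (n : ℤ) : ℂ :=
  multBernoulli 2 (k + 2)
      ((b - b⁻¹) / 2 + zhat γ / (2 * Real.pi * Complex.I) + (n : ℂ) * (b - b⁻¹) / 2) ![b, -b⁻¹] *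
    (2 * Real.pi * Complex.I / Z γ) ^ k

lemma freeEnergySummand_neg_neg {Γ : Type*} [AddCommGroup Γ] (b : ℂ) (Z zhat : Γ →+ ℂ)
    (k : ℕ) (γ : Γ) (n : ℤ) :
    freeEnergySummand b Z zhat k (-γ) (-n) = freeEnergySummand b Z zhat k γ n := by
  set x := (b - b⁻¹) / 2 + zhat γ / (2 * Real.pi * Complex.I) + (n : ℂ) * (b - b⁻¹) / 2
  have hreflect : (b - b⁻¹) / 2 + zhat (-γ) / (2 * Real.pi * Complex.I) +
      ((-n : ℤ) : ℂ) * (b - b⁻¹) / 2 = ∑ i, ![b, -b⁻¹] i - x := by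
    simp only [x, Fin.sum_univ_two, Matrix.cons_val_zero, Matrix.cons_val_one, map_neg]
    push_cast
    ring
  have hsign : (-1 : ℂ) ^ (k + 2) * (-1) ^ k = 1 := by
    rw [← pow_add]
    exact Even.neg_one_pow ⟨k + 1, by ring⟩
  rw [freeEnergySummand, freeEnergySummand, hreflect, multBernoulli_sum_sub, map_neg, div_neg,
    neg_pow (2 * Real.pi * Complex.I / Z γ)]
  rw [mul_mul_mul_comm, hsign, one_mul]

theorem bps_invariants_symmetric_combination_suffices_general
    (b : ℂ)
    (Γ : Type*) [AddCommGroup Γ]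
    (S : Finset Γ) (hSneg : ∀ γ ∈ S, -γ ∈ S)
    (Z zhat : Γ →+ ℂ)
    (Ω Ωbar : Γ → LaurentPolynomial ℚ)
    (hΩsym : ∀ γ : Γ, Ω γ = Ω (-γ)) (hΩbarsym : ∀ γ : Γ, Ωbar γ = Ωbar (-γ))
    (hcomb : ∀ (γ : Γ) (n : ℤ), AddMonoidAlgebra.coeff (Ωbar γ) n + AddMonoidAlgebra.coeff (Ωbar γ) (-n) = AddMonoidAlgebra.coeff (Ω γ) n + AddMonoidAlgebra.coeff (Ω γ) (-n)) :
    ∀ k : ℕ, 1 ≤ k →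
      (∑ γ ∈ S, ∑ᶠ n : ℤ, (AddMonoidAlgebra.coeff (Ωbar γ) n : ℂ) *
          multBernoulli 2 (k + 2)
            ((b - b⁻¹) / 2 + zhat γ / (2 * Real.pi * Complex.I) + (n : ℂ) * (b - b⁻¹) / 2)
            ![b, -b⁻¹] *
          (2 * Real.pi * Complex.I / Z γ) ^ k) =
      (∑ γ ∈ S, ∑ᶠ n : ℤ, (AddMonoidAlgebra.coeff (Ω γ) n : ℂ) *
          multBernoulli 2 (k + 2)
            ((b - b⁻¹) / 2 + zhat γ / (2 * Real.pi * Complex.I) + (n : ℂ) * (b - b⁻¹) / 2)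
            ![b, -b⁻¹] *
          (2 * Real.pi * Complex.I / Z γ) ^ k) := by
  intro k _
  have := sum_finsum_eq_of_add_comp_neg_eq (f := freeEnergySummand b Z zhat k) hSneg
    (freeEnergySummand_neg_neg b Z zhat k) (fun γ => congrArg AddMonoidAlgebra.coeff (hΩbarsym γ).symm)
    (fun γ => congrArg AddMonoidAlgebra.coeff (hΩsym γ).symm) hcomb
  simpa only [freeEnergySummand, mul_assoc] using this

/-- any assignment `Ω̄` of refined BPS invariants preserving the symmetric
combinations `Ω_n + Ω_{-n}` gives the same value of the refined free-energy formula: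
if `Ω̄_n(γ) + Ω̄_{-n}(γ) = Ω_n(γ) + Ω_{-n}(γ)` for all `γ, n`, then for every `k ≥ 1`
(i.e. every half-integer genus `g = (k+2)/2 > 1`) the two free-energy sums agree. -/
theorem bps_invariants_symmetric_combination_suffices
    (b : ℂ) (hb : b ≠ 0)
    (Γ : Type*) [AddCommGroup Γ] [Module.Free ℤ Γ] [Module.Finite ℤ Γ]
    (S : Finset Γ) (hS0 : (0 : Γ) ∉ S) (hSneg : ∀ γ ∈ S, -γ ∈ S)
    (Z zhat : Γ →+ ℂ) (hZ : ∀ γ ∈ S, Z γ ≠ 0)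
    (Ω Ωbar : Γ → LaurentPolynomial ℚ)
    (hΩsupp : ∀ γ ∉ S, Ω γ = 0) (hΩbarsupp : ∀ γ ∉ S, Ωbar γ = 0)
    (hΩsym : ∀ γ : Γ, Ω γ = Ω (-γ)) (hΩbarsym : ∀ γ : Γ, Ωbar γ = Ωbar (-γ))
    (hcomb : ∀ (γ : Γ) (n : ℤ), AddMonoidAlgebra.coeff (Ωbar γ) n + AddMonoidAlgebra.coeff (Ωbar γ) (-n) = AddMonoidAlgebra.coeff (Ω γ) n + AddMonoidAlgebra.coeff (Ω γ) (-n)) :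
    ∀ k : ℕ, 1 ≤ k →
      (∑ γ ∈ S, ∑ᶠ n : ℤ, (AddMonoidAlgebra.coeff (Ωbar γ) n : ℂ) *
          multBernoulli 2 (k + 2)
            ((b - b⁻¹) / 2 + zhat γ / (2 * Real.pi * Complex.I) + (n : ℂ) * (b - b⁻¹) / 2)
            ![b, -b⁻¹] *
          (2 * Real.pi * Complex.I / Z γ) ^ k) =
      (∑ γ ∈ S, ∑ᶠ n : ℤ, (AddMonoidAlgebra.coeff (Ω γ) n : ℂ) *
          multBernoulli 2 (k + 2)
            ((b - b⁻¹) / 2 + zhat γ / (2 * Real.pi * Complex.I) + (n : ℂ) * (b - b⁻¹) / 2)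
            ![b, -b⁻¹] *
          (2 * Real.pi * Complex.I / Z γ) ^ k) :=
  bps_invariants_symmetric_combination_suffices_general b Γ S hSneg Z zhat Ω Ωbar hΩsym hΩbarsym
    hcomb
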